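/- Let ρ be a positive definite density matrix on ℂ^{d_S}, let |μ⟩ be a unit vector in ℂ^{d_S} ⊗ ℂ^{d_E} ⊗ ℂ^{d_P} with reduced state ρ on the first factor, and let |ν⟩ be a unit vector in ℂ^{d_S} ⊗ ℂ^{d_Q} with reduced state ρ on the first factor. Then ‖[log₂(ρ) ⊗ I_{EP}, |μ⟩⟨μ|]‖₁ = ‖[log₂(ρ) ⊗ I_Q, |ν⟩⟨ν|]‖₁, i.e. the trace norm of the commutator of the pure state with log₂(ρ) ⊗ I does not depend on the choice of purification. -/

import Mathlib

/-!
For a Hermitian `M` and a vector `w`, the commutator `C = [M, |w⟩⟨w|]` equals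
`|Mw⟩⟨w| - |w⟩⟨Mw|`. Hence `CᴴC` lives on `span {w, Mw}` and satisfies `(CᴴC)² = r • CᴴC` with
`r = ⟨w|w⟩⟨w|M²|w⟩ - ⟨w|M|w⟩²`, so `√(CᴴC) = CᴴC / √r` and `‖C‖₁ = Tr(CᴴC) / √r = 2√r`.
For `M = L ⊗ I` each of these expectations is `⟨w|K ⊗ I|w⟩ = Tr(K ρ)` with `ρ` the reduced state
of `w`, so `‖C‖₁` depends on `w` only through `ρ`.
-/

open scoped Kronecker ComplexOrder
open Matrix

noncomputable section

/-- The positive semidefinite square root of a positive semidefinite matrix, as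
`Matrix.PosSemidef.sqrt` was defined in the older Mathlib (since removed). -/
def posSemidefSqrt {n : Type*} [Fintype n] [DecidableEq n] {A : Matrix n n ℂ}
    (hA : A.PosSemidef) : Matrix n n ℂ :=
  hA.1.eigenvectorUnitary.1 * diagonal ((↑) ∘ (√·) ∘ hA.1.eigenvalues) *
  (star hA.1.eigenvectorUnitary : Matrix n n ℂ)

/-- The trace norm `‖A‖₁ = Tr √(AᴴA)`. -/
def traceNorm {n : Type*} [Fintype n] [DecidableEq n] (A : Matrix n n ℂ) : ℝ :=
  ((posSemidefSqrt (Matrix.posSemidef_conjTranspose_mul_self A)).trace).re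

/-- The operator (spectral) norm `‖A‖_∞`. -/
def opNorm {n : Type*} [Fintype n] [DecidableEq n] (A : Matrix n n ℂ) : ℝ :=
  ‖Matrix.toEuclideanCLM (𝕜 := ℂ) A‖

/-- The partial trace over the second tensor factor. -/
def ptrace2 {m e : Type*} [Fintype e] (ρ : Matrix (m × e) (m × e) ℂ) : Matrix m m ℂ :=
  Matrix.of fun i j => ∑ k, ρ (i, k) (j, k)

/-- The binary logarithm `log₂` of a Hermitian matrix, via the spectral functional
calculus (junk value `0` on non-Hermitian input). -/
def matLog2 {n : Type*} [Fintype n] [DecidableEq n] (A : Matrix n n ℂ) : Matrix n n ℂ :=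
  if hA : A.IsHermitian then hA.cfc (Real.logb 2) else 0

/-- The commutator `[A, B] = A·B − B·A`. -/
def mcomm {n : Type*} [Fintype n] (A B : Matrix n n ℂ) : Matrix n n ℂ :=
  A * B - B * A

section TraceNorm

variable {m : Type*} [Fintype m] [DecidableEq m]

open scoped MatrixOrder in
lemma posSemidefSqrt_eq_of_sq_eq {A N : Matrix m m ℂ} (hA : A.PosSemidef) (hN : N.PosSemidef)
    (h : N ^ 2 = A) : posSemidefSqrt hA = N := by
  have hsqrt : posSemidefSqrt hA = CFC.sqrt A := by
    rw [CFC.sqrt_eq_cfc, cfc_nnreal_eq_real _ A hA.nonneg, hA.1.cfc_eq]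
    simp only [IsHermitian.cfc, Unitary.conjStarAlgAut_apply, posSemidefSqrt]
    congr 3
    ext i
    simp [Real.coe_sqrt, Real.coe_toNNReal', hA.eigenvalues_nonneg]
  rw [hsqrt, CFC.sqrt_eq_iff _ _ hA.nonneg hN.nonneg, ← sq, h]

lemma traceNorm_eq_of_sq_eq {A N : Matrix m m ℂ} (hN : N.PosSemidef) (h : N ^ 2 = Aᴴ * A) :
    traceNorm A = N.trace.re := by
  rw [traceNorm, posSemidefSqrt_eq_of_sq_eq _ hN h]

lemma traceNorm_eq_of_mul_self_eq_smul {A : Matrix m m ℂ} {r : ℝ} (hr : 0 ≤ r)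
    (h : (Aᴴ * A) * (Aᴴ * A) = (r : ℂ) • (Aᴴ * A)) :
    traceNorm A = (Aᴴ * A).trace.re / √r := by
  rcases hr.eq_or_lt with rfl | hr
  · have hD : Aᴴ * A = 0 := by
      rw [← conjTranspose_mul_self_eq_zero, (isHermitian_conjTranspose_mul_self A).eq, h]
      simp
    rw [traceNorm_eq_of_sq_eq PosSemidef.zero (by rw [hD]; simp), hD]
    simp
  · set D := Aᴴ * A
    have hN : ((√r)⁻¹ • D).PosSemidef :=
      (posSemidef_conjTranspose_mul_self A).smul (inv_nonneg.mpr (Real.sqrt_nonneg r))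
    have hsq : ((√r)⁻¹ • D) ^ 2 = D := by
      have hscalar : (√r)⁻¹ * (√r)⁻¹ * r = 1 := by
        rw [← mul_inv, Real.mul_self_sqrt hr.le, inv_mul_cancel₀ hr.ne']
      rw [sq, smul_mul_smul_comm, h, Complex.coe_smul, smul_smul, hscalar, one_smul]
    rw [traceNorm_eq_of_sq_eq hN hsq, trace_smul, Complex.real_smul, Complex.re_ofReal_mul,
      inv_mul_eq_div]

lemma traceNorm_mcomm_vecMulVec {M : Matrix m m ℂ} (hM : M.IsHermitian) (w : m → ℂ) :
    traceNorm (mcomm M (vecMulVec w (star w))) =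
      2 * √((star w ⬝ᵥ w) * (star w ⬝ᵥ (M * M) *ᵥ w) - (star w ⬝ᵥ M *ᵥ w) ^ 2).re := by
  set a := M *ᵥ w
  have hstar_a : star a = star w ᵥ* M := by rw [star_mulVec, hM.eq]
  set n := star w ⬝ᵥ w
  set α := star w ⬝ᵥ a
  set s := star a ⬝ᵥ a
  have haw : star a ⬝ᵥ w = α := by rw [hstar_a, ← dotProduct_mulVec]
  have hs : star w ⬝ᵥ (M * M) *ᵥ w = s := by
    rw [← mulVec_mulVec, dotProduct_mulVec, ← hstar_a]
  rw [hs]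
  have hC : mcomm M (vecMulVec w (star w)) = vecMulVec a (star w) - vecMulVec w (star a) := by
    rw [mcomm, mul_vecMulVec, vecMulVec_mul, ← hstar_a]
  set C := mcomm M (vecMulVec w (star w))
  have hD : Cᴴ * C = n • vecMulVec a (star a) + s • vecMulVec w (star w)
      - α • vecMulVec a (star w) - α • vecMulVec w (star a) := by
    simp only [hC, conjTranspose_sub, conjTranspose_vecMulVec, star_star, sub_mul, mul_sub,
      vecMulVec_mul_vecMulVec, vecMulVec_smul, haw]
    abel
  have hD2 : (Cᴴ * C) * (Cᴴ * C) = (n * s - α ^ 2) • (Cᴴ * C) := by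
    rw [hD]
    simp only [sub_mul, mul_sub, add_mul, mul_add, smul_mul_assoc, mul_smul_comm,
      vecMulVec_mul_vecMulVec, vecMulVec_smul, haw]
    module
  have htr : (Cᴴ * C).trace = 2 * (n * s - α ^ 2) := by
    rw [hD]
    simp only [trace_sub, trace_add, trace_smul, trace_vecMulVec, smul_eq_mul]
    rw [dotProduct_comm a, dotProduct_comm w, dotProduct_comm a (star w), dotProduct_comm w, haw]
    ring
  have hnonneg : 0 ≤ n * s - α ^ 2 := by
    have htr_nonneg := (posSemidef_conjTranspose_mul_self C).trace_nonneg
    rw [htr] at htr_nonneg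
    have := mul_nonneg (show (0 : ℂ) ≤ 2⁻¹ by norm_num [Complex.nonneg_iff]) htr_nonneg
    rwa [inv_mul_cancel_left₀ two_ne_zero] at this
  set r := (n * s - α ^ 2).re
  have hreal : (r : ℂ) = n * s - α ^ 2 :=
    (Complex.eq_re_of_ofReal_le (r := 0) (by rwa [Complex.ofReal_zero])).symm
  rw [traceNorm_eq_of_mul_self_eq_smul (Complex.nonneg_iff.mp hnonneg).1 (hreal ▸ hD2), htr,
    ← hreal]
  norm_cast
  rw [mul_div_assoc, Real.div_sqrt]

end TraceNorm

lemma isHermitian_kronecker_one {n E : Type*} [DecidableEq E] {L : Matrix n n ℂ}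
    (hL : L.IsHermitian) : (L ⊗ₖ (1 : Matrix E E ℂ)).IsHermitian := by
  rw [IsHermitian, conjTranspose_kronecker, hL.eq, conjTranspose_one]

section Purification

variable {n E : Type*} [Fintype n] [Fintype E] [DecidableEq E]

lemma star_dotProduct_kronecker_one_mulVec (K : Matrix n n ℂ) (w : n × E → ℂ) :
    star w ⬝ᵥ (K ⊗ₖ (1 : Matrix E E ℂ)) *ᵥ w = (K * ptrace2 (vecMulVec w (star w))).trace := by
  simp only [dotProduct, mulVec, trace, diag_apply, mul_apply, ptrace2, of_apply, vecMulVec_apply,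
    Fintype.sum_prod_type, kroneckerMap_apply, one_apply, ite_mul, mul_one, zero_mul, mul_ite,
    mul_zero, Finset.sum_ite_eq, Finset.mem_univ, if_true, Pi.star_apply, Finset.mul_sum]
  refine Finset.sum_congr rfl fun i _ => ?_
  rw [Finset.sum_comm]
  exact Finset.sum_congr rfl fun j _ => Finset.sum_congr rfl fun k _ => by ring

lemma traceNorm_mcomm_kronecker_one_vecMulVec [DecidableEq n] {L : Matrix n n ℂ}
    (hL : L.IsHermitian) {w : n × E → ℂ} {ρ : Matrix n n ℂ}
    (hw : ptrace2 (vecMulVec w (star w)) = ρ) :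
    traceNorm (mcomm (L ⊗ₖ (1 : Matrix E E ℂ)) (vecMulVec w (star w))) =
      2 * √(ρ.trace * (L * L * ρ).trace - (L * ρ).trace ^ 2).re := by
  have hnorm : star w ⬝ᵥ w = ρ.trace := by
    rw [← hw, ← one_mul (ptrace2 _), ← star_dotProduct_kronecker_one_mulVec, one_kronecker_one,
      one_mulVec]
  rw [traceNorm_mcomm_vecMulVec (isHermitian_kronecker_one hL), ← mul_kronecker_mul, one_mul,
    star_dotProduct_kronecker_one_mulVec, star_dotProduct_kronecker_one_mulVec, hnorm, hw]

end Purification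

lemma isHermitian_matLog2 {n : Type*} [Fintype n] [DecidableEq n] (A : Matrix n n ℂ) :
    (matLog2 A).IsHermitian := by
  rw [matLog2]
  split_ifs with hA
  · rw [← hA.cfc_eq]
    exact cfc_predicate (Real.logb 2) A
  · exact isHermitian_zero

theorem traceNorm_comm_log_purification_independent_general {dS dE dP dQ : ℕ}
    (ρ : Matrix (Fin dS) (Fin dS) ℂ)
    (w : Fin dS × (Fin dE × Fin dP) → ℂ)
    (hwred : ptrace2 (Matrix.of fun x y => w x * star (w y)) = ρ)
    (v : Fin dS × Fin dQ → ℂ)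
    (hvred : ptrace2 (Matrix.of fun x y => v x * star (v y)) = ρ) :
    traceNorm (mcomm (matLog2 ρ ⊗ₖ (1 : Matrix (Fin dE × Fin dP) (Fin dE × Fin dP) ℂ))
        (Matrix.of fun x y => w x * star (w y))) =
      traceNorm (mcomm (matLog2 ρ ⊗ₖ (1 : Matrix (Fin dQ) (Fin dQ) ℂ))
        (Matrix.of fun x y => v x * star (v y))) := by
  have hL : (matLog2 ρ).IsHermitian := isHermitian_matLog2 ρ
  -- `Matrix.of fun x y => w x * star (w y)` is `vecMulVec w (star w)` by unfolding.
  exact (traceNorm_mcomm_kronecker_one_vecMulVec hL hwred).trans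
    (traceNorm_mcomm_kronecker_one_vecMulVec hL hvred).symm

/-- The trace norm of the commutator `[log₂(ρ) ⊗ I, |purification⟩⟨purification|]`
does not depend on the choice of purification of `ρ`. -/
theorem traceNorm_comm_log_purification_independent {dS dE dP dQ : ℕ}
    (ρ : Matrix (Fin dS) (Fin dS) ℂ) (hρ : ρ.PosDef) (htr : ρ.trace = 1)
    (w : Fin dS × (Fin dE × Fin dP) → ℂ)
    (hwunit : ∑ x, Complex.normSq (w x) = 1)
    (hwred : ptrace2 (Matrix.of fun x y => w x * star (w y)) = ρ)
    (v : Fin dS × Fin dQ → ℂ)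
    (hvunit : ∑ x, Complex.normSq (v x) = 1)
    (hvred : ptrace2 (Matrix.of fun x y => v x * star (v y)) = ρ) :
    traceNorm (mcomm (matLog2 ρ ⊗ₖ (1 : Matrix (Fin dE × Fin dP) (Fin dE × Fin dP) ℂ))
        (Matrix.of fun x y => w x * star (w y))) =
      traceNorm (mcomm (matLog2 ρ ⊗ₖ (1 : Matrix (Fin dQ) (Fin dQ) ℂ))
        (Matrix.of fun x y => v x * star (v y))) :=
  traceNorm_comm_log_purification_independent_general ρ w hwred v hvred
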